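/- arXiv:1802.04489 — 2 statements merged into one kernel-verified Lean document; each statement's English description precedes it below -/
import Mathlib

section
/- Let (aₙ)ₙ≥1 be a sequence of positive reals with aₙ = 1 - 2/n + O(n^{-3/2}) (for n ≥ 3, say), and (bₙ) a sequence with bₙ → b > 0. Define Vₙ₊₁ = aₙVₙ + bₙ with V₀ ≥ 0. Then Vₙ/n → b/3 as n → ∞. -/
open Filter

set_option maxHeartbeats 2000000 in
theorem stmt_7 (a b : ℕ → ℝ) (bb : ℝ) (hbb : 0 < bb)
    (ha_pos : ∀ n, 1 ≤ n → 0 < a n)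
    (ha : ∃ C > 0, ∀ n, 3 ≤ n → |a n - (1 - 2 / (n : ℝ))| ≤ C / (n : ℝ) ^ ((3:ℝ)/2))
    (hb : Tendsto b atTop (nhds bb))
    (V : ℕ → ℝ) (hV0 : 0 ≤ V 0)
    (hrec : ∀ n, 1 ≤ n → V (n + 1) = a n * V n + b n) :
    Tendsto (fun n => V n / n) atTop (nhds (bb / 3)) := by
  obtain ⟨C, hC, haC⟩ := ha
  -- key helper: C / n^{3/2} * n → 0
  have hkey : Tendsto (fun n : ℕ => C / (n:ℝ) ^ ((3:ℝ)/2) * n) atTop (nhds 0) := by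
    have h1 : Tendsto (fun n : ℕ => C * ((n:ℝ) ^ (-((1:ℝ)/2)))) atTop (nhds (C * 0)) :=
      ((tendsto_rpow_neg_atTop (by norm_num : (0:ℝ) < 1/2)).comp
        tendsto_natCast_atTop_atTop).const_mul C
    rw [mul_zero] at h1
    refine h1.congr' ?_
    filter_upwards [eventually_ge_atTop 1] with n hn
    have hn0 : (0:ℝ) < n := by exact_mod_cast hn
    have h2 : (n:ℝ) ^ (-((1:ℝ)/2)) = (n:ℝ) ^ ((1:ℝ)) / (n:ℝ) ^ ((3:ℝ)/2) := by
      rw [← Real.rpow_sub hn0]; norm_num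
    rw [h2, Real.rpow_one]; ring
  have hkey' : ∀ δ : ℝ, 0 < δ → ∀ᶠ n : ℕ in atTop, C / (n:ℝ) ^ ((3:ℝ)/2) * n ≤ δ :=
    fun δ hδ => hkey.eventually (eventually_le_nhds hδ)
  -- Upper bound
  have upper : ∀ ε : ℝ, 0 < ε → ∃ N : ℕ, ∃ D : ℝ, 1 ≤ N ∧ 0 ≤ D ∧
      ∀ n, N ≤ n → V n ≤ (bb + ε)/3 * n + D := by
    intro ε hε
    set L := (bb + ε)/3 with hL
    have hLpos : 0 < L := by rw [hL]; positivity
    have hb_up : ∀ᶠ n : ℕ in atTop, b n ≤ bb + ε/2 :=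
      hb.eventually (eventually_le_nhds (by linarith))
    have h2 : ∀ᶠ n : ℕ in atTop, C / (n:ℝ)^((3:ℝ)/2) * n ≤ 2 := hkey' 2 (by norm_num)
    have h3 : ∀ᶠ n : ℕ in atTop, C / (n:ℝ)^((3:ℝ)/2) * n ≤ ε/(2*L) :=
      hkey' _ (by positivity)
    obtain ⟨N, hN⟩ := eventually_atTop.1 (((hb_up.and h2).and h3).and (eventually_ge_atTop 3))
    have hN3 : 3 ≤ N := (hN N le_rfl).2
    refine ⟨N, max (V N - L*N) 0, by omega, le_max_right _ _, ?_⟩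
    intro n hn
    induction n, hn using Nat.le_induction with
    | base => have := le_max_left (V N - L*(N:ℝ)) 0; linarith
    | succ n hn ih =>
      obtain ⟨⟨⟨hbn, h2n⟩, h3n⟩, h3le⟩ := hN n hn
      have hn1 : 1 ≤ n := by omega
      have hn0 : (0:ℝ) < n := by exact_mod_cast hn1
      have hA : a n ≤ 1 - 2/(n:ℝ) + C/(n:ℝ)^((3:ℝ)/2) := by
        have h := haC n h3le; rw [abs_le] at h; linarith [h.2]
      have hA1 : a n ≤ 1 := by
        have hcn : C/(n:ℝ)^((3:ℝ)/2) ≤ 2/(n:ℝ) := (le_div_iff₀ hn0).mpr h2n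
        linarith
      have hx : C/(n:ℝ)^((3:ℝ)/2) * (L * n) ≤ ε/2 := by
        have h := mul_le_mul_of_nonneg_right h3n hLpos.le
        calc C/(n:ℝ)^((3:ℝ)/2) * (L*n) = C/(n:ℝ)^((3:ℝ)/2)*n*L := by ring
        _ ≤ ε/(2*L)*L := h
        _ = ε/2 := by field_simp
      have e1 : 2/(n:ℝ) * (L * n) = 2*L := by field_simp
      have hanpos := ha_pos n hn1
      set D := max (V N - L*(N:ℝ)) 0 with hD
      have hD0 : (0:ℝ) ≤ D := le_max_right _ _
      have step1 : a n * V n ≤ a n * (L*n + D) := mul_le_mul_of_nonneg_left ih hanpos.le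
      have hLn : (0:ℝ) ≤ L * n := by positivity
      have step2 : a n * (L*n) ≤ (1 - 2/(n:ℝ) + C/(n:ℝ)^((3:ℝ)/2)) * (L*n) :=
        mul_le_mul_of_nonneg_right hA hLn
      have split : a n * (L*n + D) = a n * (L*n) + a n * D := by ring
      have haD : a n * D ≤ D := mul_le_of_le_one_left hD0 hA1
      have expand : (1 - 2/(n:ℝ) + C/(n:ℝ)^((3:ℝ)/2)) * (L*n)
          = L*n - 2/(n:ℝ)*(L*n) + C/(n:ℝ)^((3:ℝ)/2)*(L*n) := by ring
      rw [hrec n hn1]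
      push_cast
      have h3L : 3 * L = bb + ε := by rw [hL]; ring
      linarith
  -- Nonnegativity of V eventually
  have hb_lo : ∀ᶠ n : ℕ in atTop, bb/2 ≤ b n :=
    hb.eventually (eventually_ge_nhds (by linarith))
  have ha1' : ∀ᶠ n : ℕ in atTop, a n ≤ 1 := by
    filter_upwards [hkey' 2 (by norm_num), eventually_ge_atTop 3] with n h2n h3n
    have hn0 : (0:ℝ) < n := by exact_mod_cast Nat.lt_of_lt_of_le (by norm_num) h3n
    have hcn : C/(n:ℝ)^((3:ℝ)/2) ≤ 2/(n:ℝ) := (le_div_iff₀ hn0).mpr h2n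
    have h := haC n h3n; rw [abs_le] at h; linarith [h.2]
  have nonneg : ∃ N₁ : ℕ, 1 ≤ N₁ ∧ ∀ n, N₁ ≤ n → 0 ≤ V n := by
    obtain ⟨N₂, hN₂⟩ := eventually_atTop.1 ((hb_lo.and ha1').and (eventually_ge_atTop 1))
    have inv : ∀ k : ℕ, 0 ≤ V (N₂ + k) ∨ V N₂ + k * (bb/2) ≤ V (N₂ + k) := by
      intro k
      induction k with
      | zero => right; simp
      | succ k ih =>
        obtain ⟨⟨hbk, hak⟩, h1k⟩ := hN₂ (N₂+k) (Nat.le_add_right _ _)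
        have hrw := hrec (N₂+k) h1k
        have hap := ha_pos (N₂+k) h1k
        rcases le_or_gt 0 (V (N₂+k)) with h | h
        · left
          rw [show N₂ + (k+1) = (N₂+k)+1 from rfl, hrw]
          nlinarith [mul_nonneg hap.le h]
        · rcases ih with h0 | h0
          · linarith
          · right
            rw [show N₂ + (k+1) = (N₂+k)+1 from rfl, hrw]
            push_cast
            nlinarith [mul_nonneg (by linarith : (0:ℝ) ≤ 1 - a (N₂+k))
              (by linarith : (0:ℝ) ≤ -V (N₂+k))]
    set K := ⌈(-V N₂) / (bb/2)⌉₊ with hKdef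
    have hK : 0 ≤ V N₂ + K * (bb/2) := by
      have h1 : (-V N₂) / (bb/2) ≤ (K:ℝ) := Nat.le_ceil _
      have h2 : -V N₂ ≤ (K:ℝ) * (bb/2) := (div_le_iff₀ (by linarith)).mp h1
      linarith
    have h0 : 0 ≤ V (N₂ + K) := by
      rcases inv K with h | h
      · exact h
      · linarith
    have hN₂1 : 1 ≤ N₂ := (hN₂ N₂ le_rfl).2
    refine ⟨N₂ + K, by omega, ?_⟩
    intro n hn
    induction n, hn using Nat.le_induction with
    | base => exact h0
    | succ n hn ih =>
      have h1k : 1 ≤ n := by omega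
      obtain ⟨⟨hbk, _⟩, _⟩ := hN₂ n (le_trans (Nat.le_add_right _ _) hn)
      rw [hrec n h1k]
      have hap := ha_pos n h1k
      nlinarith [mul_nonneg hap.le ih]
  -- Lower bound
  have lower : ∀ ε : ℝ, 0 < ε → ε < bb → ∃ N : ℕ, 1 ≤ N ∧
      ∀ n, N ≤ n → (bb - ε)/3 * ((n:ℝ) - N) ≤ V n := by
    intro ε hε hεbb
    set L := (bb - ε)/3 with hL
    have hLpos : 0 < L := by rw [hL]; linarith [div_pos (by linarith : (0:ℝ) < bb - ε) (by norm_num : (0:ℝ) < 3)]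
    obtain ⟨N₁, hN₁1, hN₁⟩ := nonneg
    have hb_lo2 : ∀ᶠ n : ℕ in atTop, bb - ε/2 ≤ b n :=
      hb.eventually (eventually_ge_nhds (by linarith))
    have h3 : ∀ᶠ n : ℕ in atTop, C / (n:ℝ)^((3:ℝ)/2) * n ≤ ε/(2*L) :=
      hkey' _ (by positivity)
    have h4 : ∀ᶠ n : ℕ in atTop, C / (n:ℝ)^((3:ℝ)/2) ≤ 1/3 := by
      filter_upwards [hkey' (1/3) (by norm_num), eventually_ge_atTop 1] with n h2n h1n
      have hn1 : (1:ℝ) ≤ n := by exact_mod_cast h1n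
      have hc0 : (0:ℝ) ≤ C / (n:ℝ)^((3:ℝ)/2) := by positivity
      nlinarith
    obtain ⟨N, hN⟩ := eventually_atTop.1 ((((hb_lo2.and h3).and h4).and
      (eventually_ge_atTop 3)).and (eventually_ge_atTop N₁))
    have hN3 : 3 ≤ N := (hN N le_rfl).1.2
    refine ⟨N, by omega, ?_⟩
    intro n hn
    induction n, hn using Nat.le_induction with
    | base => simpa using hN₁ N (le_trans (hN N le_rfl).2 le_rfl)
    | succ n hn ih =>
      obtain ⟨⟨⟨⟨hbn, h3n⟩, h4n⟩, h3le⟩, hnN₁⟩ := hN n hn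
      have hn1 : 1 ≤ n := by omega
      have hn0 : (0:ℝ) < n := by exact_mod_cast hn1
      have hn3 : (3:ℝ) ≤ n := by exact_mod_cast h3le
      have hA : 1 - 2/(n:ℝ) - C/(n:ℝ)^((3:ℝ)/2) ≤ a n := by
        have h := haC n h3le; rw [abs_le] at h; linarith [h.1]
      have hlb0 : 0 ≤ 1 - 2/(n:ℝ) - C/(n:ℝ)^((3:ℝ)/2) := by
        have h2n3 : 2/(n:ℝ) ≤ 2/3 := by
          apply div_le_div_of_nonneg_left (by norm_num) (by norm_num) hn3
        linarith
      have hVn0 : 0 ≤ V n := hN₁ n hnN₁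
      have hNn : ((N:ℝ)) ≤ n := by exact_mod_cast hn
      have hLnN : 0 ≤ L * ((n:ℝ) - N) := mul_nonneg hLpos.le (by linarith)
      have s1 : (1 - 2/(n:ℝ) - C/(n:ℝ)^((3:ℝ)/2)) * V n ≤ a n * V n :=
        mul_le_mul_of_nonneg_right hA hVn0
      have s2 : (1 - 2/(n:ℝ) - C/(n:ℝ)^((3:ℝ)/2)) * (L*((n:ℝ)-N))
          ≤ (1 - 2/(n:ℝ) - C/(n:ℝ)^((3:ℝ)/2)) * V n :=
        mul_le_mul_of_nonneg_left ih hlb0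
      have hmono : L*((n:ℝ)-N) ≤ L*(n:ℝ) := by nlinarith [Nat.cast_nonneg (α := ℝ) N]
      have e1 : 2/(n:ℝ) * (L*((n:ℝ)-N)) ≤ 2*L := by
        calc 2/(n:ℝ)*(L*((n:ℝ)-N)) ≤ 2/(n:ℝ)*(L*n) :=
              mul_le_mul_of_nonneg_left hmono (by positivity)
        _ = 2*L := by field_simp
      have e2 : C/(n:ℝ)^((3:ℝ)/2) * (L*((n:ℝ)-N)) ≤ ε/2 := by
        have hc0 : (0:ℝ) ≤ C/(n:ℝ)^((3:ℝ)/2) := by positivity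
        calc C/(n:ℝ)^((3:ℝ)/2)*(L*((n:ℝ)-N)) ≤ C/(n:ℝ)^((3:ℝ)/2)*(L*n) :=
              mul_le_mul_of_nonneg_left hmono hc0
        _ = C/(n:ℝ)^((3:ℝ)/2)*n*L := by ring
        _ ≤ ε/(2*L)*L := mul_le_mul_of_nonneg_right h3n hLpos.le
        _ = ε/2 := by field_simp
      have expand : (1 - 2/(n:ℝ) - C/(n:ℝ)^((3:ℝ)/2)) * (L*((n:ℝ)-N))
          = L*((n:ℝ)-N) - 2/(n:ℝ)*(L*((n:ℝ)-N)) - C/(n:ℝ)^((3:ℝ)/2)*(L*((n:ℝ)-N)) := by ring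
      have h3L : 3 * L = bb - ε := by rw [hL]; ring
      rw [hrec n hn1]
      push_cast
      linarith
  -- Final assembly
  rw [Metric.tendsto_atTop]
  intro ε hε
  obtain ⟨ε₁, hε₁pos, hε₁bb, hε₁ε⟩ : ∃ ε₁ : ℝ, 0 < ε₁ ∧ ε₁ < bb ∧ ε₁ ≤ ε/2 := by
    refine ⟨min ε bb / 2, by have := lt_min hε hbb; positivity, ?_, ?_⟩
    · have := min_le_right ε bb; linarith
    · have := min_le_left ε bb; linarith
  obtain ⟨Nu, D, hNu1, hD0, hU⟩ := upper ε₁ hε₁pos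
  obtain ⟨Nl, hNl1, hLo⟩ := lower ε₁ hε₁pos hε₁bb
  have hdiv1 : Tendsto (fun n:ℕ => D / n) atTop (nhds 0) :=
    tendsto_const_div_atTop_nhds_zero_nat D
  have hdiv2 : Tendsto (fun n:ℕ => ((bb-ε₁)/3 * Nl) / n) atTop (nhds 0) :=
    tendsto_const_div_atTop_nhds_zero_nat _
  have hev1 : ∀ᶠ n:ℕ in atTop, D / n ≤ ε/3 :=
    hdiv1.eventually (eventually_le_nhds (by linarith))
  have hev2 : ∀ᶠ n:ℕ in atTop, ((bb-ε₁)/3 * Nl) / n ≤ ε/3 :=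
    hdiv2.eventually (eventually_le_nhds (by linarith))
  obtain ⟨N, hN⟩ := eventually_atTop.1 ((hev1.and hev2).and (eventually_ge_atTop (max Nu Nl)))
  refine ⟨max N 1, ?_⟩
  intro n hn
  have hnN : N ≤ n := le_trans (le_max_left _ _) hn
  obtain ⟨⟨he1, he2⟩, hnm⟩ := hN n hnN
  have hnu : Nu ≤ n := le_trans (le_max_left _ _) hnm
  have hnl : Nl ≤ n := le_trans (le_max_right _ _) hnm
  have hn1 : 1 ≤ n := le_trans (le_max_right _ _) hn
  have hn0 : (0:ℝ) < n := by exact_mod_cast hn1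
  have hu := hU n hnu
  have hlo := hLo n hnl
  show dist (V n / (n:ℝ)) (bb/3) < ε
  rw [Real.dist_eq, abs_lt]
  have hudiv : V n / n ≤ (bb+ε₁)/3 + D/n := by
    have h1 : V n / n ≤ ((bb+ε₁)/3 * n + D)/n := (div_le_div_iff_of_pos_right hn0).mpr hu
    have h2 : ((bb+ε₁)/3 * n + D)/n = (bb+ε₁)/3 + D/n := by
      rw [add_div, mul_div_assoc, div_self hn0.ne', mul_one]
    linarith
  have hldiv : (bb-ε₁)/3 - ((bb-ε₁)/3 * Nl)/n ≤ V n / n := by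
    have h1 : ((bb-ε₁)/3 * ((n:ℝ) - Nl))/n ≤ V n / n := (div_le_div_iff_of_pos_right hn0).mpr hlo
    have h2 : ((bb-ε₁)/3 * ((n:ℝ) - Nl))/n = (bb-ε₁)/3 - ((bb-ε₁)/3 * Nl)/n := by
      rw [mul_sub, sub_div, mul_div_assoc, div_self hn0.ne', mul_one]
    linarith
  clear upper lower nonneg hkey hkey' hb_lo ha1' hU hLo hN hb hrec ha_pos haC hdiv1 hdiv2 hev1 hev2 hV0
  constructor
  · linarith only [hldiv, he2, hε₁ε, hε]
  · linarith only [hudiv, he1, hε₁ε, hε]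
end

section
/- Let c > 0 and let (aₖ)ₖ≥1 be positive reals with aₖ = 1 − 2/k + O(k^{−3/2}). Then there is a constant e^a > 0 such that ∏ₖ₌₁ⁿ aₖ = (e^a/n²)·(1 + O(n^{−1/2}·(log n)^δ)) for any δ > 1/2; in particular n²·∏ₖ₌₁ⁿ aₖ converges to a positive limit. -/
open Filter Topology Asymptotics

/-!
Put `b n = n² ∏_{k ≤ n} a k`. Since `(n + 1)² (1 - 2 / (n + 1)) = n² - 1`, the ratio
`b (n + 1) / b n` is `1 + O(n^{-3/2})`, so the increments of `log b n` are `O(n^{-3/2})` and are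
dominated by the telescoping differences of `2c / √n`. Hence `log b n → l` with
`|log b n - l| ≤ 2c / √n`, and `b n = e^l + O(n^{-1/2})`, a fortiori `O(n^{-1/2} (log n)^δ)`.
-/

theorem rpow_three_div_two_eq_mul_sqrt {x : ℝ} (hx : 0 ≤ x) : x ^ ((3 : ℝ) / 2) = x * √x := by
  rw [show (3 : ℝ) / 2 = 1 + 1 / 2 by norm_num, Real.rpow_add' hx (by norm_num), Real.rpow_one,
    Real.sqrt_eq_rpow]

theorem abs_sq_mul_div_sq_sub_one_le {x y : ℝ} (hx : 1 ≤ x) :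
    |(x + 1) ^ 2 * y / x ^ 2 - 1| ≤ 4 * |y - (1 - 2 / (x + 1))| + 1 / x ^ 2 := by
  have hx0 : 0 < x := by linarith
  have hsplit : (x + 1) ^ 2 * y / x ^ 2 - 1
      = (x + 1) ^ 2 / x ^ 2 * (y - (1 - 2 / (x + 1))) - 1 / x ^ 2 := by
    field_simp
    ring
  have hfactor : (x + 1) ^ 2 / x ^ 2 ≤ 4 := by
    rw [div_le_iff₀ (by positivity)]
    nlinarith
  rw [hsplit]
  refine (abs_sub _ _).trans (add_le_add ?_ (abs_of_pos (by positivity)).le)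
  rw [abs_mul, abs_of_pos (by positivity)]
  exact mul_le_mul_of_nonneg_right hfactor (abs_nonneg _)

theorem one_div_sq_le_four_div_mul_sqrt {x : ℝ} (hx : 1 ≤ x) :
    1 / x ^ 2 ≤ 4 / ((x + 1) * √(x + 1)) := by
  have hsqrt : √(x + 1) ≤ 2 * x := Real.sqrt_le_iff.2 ⟨by linarith, by nlinarith⟩
  rw [div_le_div_iff₀ (by positivity) (by positivity)]
  nlinarith [mul_le_mul_of_nonneg_left hsqrt (by linarith : 0 ≤ x + 1)]

theorem one_div_add_one_mul_sqrt_le_two_div_sqrt_sub {x : ℝ} (hx : 0 < x) :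
    1 / ((x + 1) * √(x + 1)) ≤ 2 / √x - 2 / √(x + 1) := by
  set u := √x
  set v := √(x + 1)
  have hu : 0 < u := Real.sqrt_pos.2 hx
  have huv : u ≤ v := Real.sqrt_le_sqrt (by linarith)
  have hu2 : u * u = x := Real.mul_self_sqrt hx.le
  have hv2 : v * v = x + 1 := Real.mul_self_sqrt (by linarith)
  rw [← hv2, div_sub_div _ _ hu.ne' (by positivity),
    div_le_div_iff₀ (by positivity) (by positivity)]
  have hdiff : (v - u) * (v + u) = 1 := by linear_combination hv2 - hu2
  have hcube : u * v * (u + v) ≤ 2 * (v * v * v) := by nlinarith [mul_pos hu hu]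
  calc 1 * (u * v) = u * v * (u + v) * (v - u) := by linear_combination (-(u * v)) * hdiff
    _ ≤ 2 * (v * v * v) * (v - u) := mul_le_mul_of_nonneg_right hcube (sub_nonneg.2 huv)
    _ = (2 * v - u * 2) * (v * v * v) := by ring

theorem exists_tendsto_of_abs_sub_succ_le {x g : ℕ → ℝ}
    (hstep : ∀ᶠ n in atTop, |x (n + 1) - x n| ≤ g n - g (n + 1))
    (hg : Tendsto g atTop (𝓝 0)) :
    ∃ l, Tendsto x atTop (𝓝 l) ∧ ∀ᶠ n in atTop, |x n - l| ≤ g n := by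
  obtain ⟨N, hN⟩ := eventually_atTop.1 hstep
  have hchain : ∀ n, N ≤ n → ∀ m, n ≤ m → |x m - x n| ≤ g n - g m := by
    intro n hn m hm
    induction m, hm using Nat.le_induction with
    | base => simp
    | succ m hm ih =>
      linarith [abs_sub_le (x (m + 1)) (x m) (x n), hN m (hn.trans hm)]
  have hcauchy : CauchySeq x := by
    refine Metric.cauchySeq_iff'.2 fun ε hε => ?_
    obtain ⟨N', hN'⟩ := Metric.tendsto_atTop.1 hg (ε / 2) (half_pos hε)
    refine ⟨max N N', fun n hn => ?_⟩
    have hgn := abs_lt.1 (by simpa using hN' n (le_of_max_le_right hn))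
    have hgN := abs_lt.1 (by simpa using hN' (max N N') (le_max_right _ _))
    rw [Real.dist_eq]
    linarith [hchain (max N N') (le_max_left _ _) n hn]
  obtain ⟨l, hl⟩ := cauchySeq_tendsto_of_complete hcauchy
  refine ⟨l, hl, eventually_atTop.2 ⟨N, fun n hn => ?_⟩⟩
  rw [abs_sub_comm, ← sub_zero (g n)]
  exact le_of_tendsto_of_tendsto (hl.sub_const _).abs (tendsto_const_nhds.sub hg)
    (eventually_atTop.2 ⟨n, hchain n hn⟩)

theorem exists_pos_tendsto_of_div_sub_one_isBigO {b : ℕ → ℝ} (hb : ∀ᶠ n in atTop, 0 < b n)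
    (hratio : (fun n => b (n + 1) / b n - 1) =O[atTop] fun n : ℕ => 1 / ((n + 1) * √(n + 1))) :
    ∃ L > 0, Tendsto b atTop (𝓝 L) ∧ (fun n => b n - L) =O[atTop] fun n : ℕ => 1 / √n := by
  have hratio_lim : Tendsto (fun n => b (n + 1) / b n) atTop (𝓝 1) := by
    have hmajorant : Tendsto (fun x : ℝ => 1 / (x * √x)) atTop (𝓝 0) :=
      tendsto_const_nhds.div_atTop (tendsto_id.atTop_mul_atTop₀ Real.tendsto_sqrt_atTop)
    simpa using (hratio.trans_tendsto <|
      hmajorant.comp (tendsto_natCast_atTop_atTop.atTop_add tendsto_const_nhds)).add_const 1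
  have hlog : (fun n => Real.log (b (n + 1)) - Real.log (b n)) =O[atTop]
      fun n : ℕ => 1 / ((n + 1) * √(n + 1)) := by
    refine (((Real.hasDerivAt_log one_ne_zero).isBigO_sub.comp_tendsto hratio_lim).trans
      hratio).congr' ?_ EventuallyEq.rfl
    filter_upwards [hb, (tendsto_add_atTop_nat 1).eventually hb] with n hn hn1
    simp [Real.log_div hn1.ne' hn.ne']
  obtain ⟨c, hc, hlog_bound⟩ := hlog.exists_pos
  have hstep : ∀ᶠ n : ℕ in atTop, |Real.log (b (n + 1)) - Real.log (b n)|
      ≤ 2 * c / √n - 2 * c / √(n + 1 : ℕ) := by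
    filter_upwards [hlog_bound.bound, eventually_gt_atTop 0] with n hn hn0
    rw [Real.norm_eq_abs, Real.norm_of_nonneg (by positivity)] at hn
    push_cast
    exact hn.trans <| (mul_le_mul_of_nonneg_left
      (one_div_add_one_mul_sqrt_le_two_div_sqrt_sub (Nat.cast_pos.2 hn0)) hc.le).trans_eq (by ring)
  obtain ⟨l, hl, hdist⟩ := exists_tendsto_of_abs_sub_succ_le (x := fun n => Real.log (b n))
    (g := fun n : ℕ => 2 * c / √n) hstep
    (tendsto_const_nhds.div_atTop (Real.tendsto_sqrt_atTop.comp tendsto_natCast_atTop_atTop))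
  have hexp : (fun n => Real.exp (Real.log (b n))) =ᶠ[atTop] b := by
    filter_upwards [hb] with n hn using Real.exp_log hn
  refine ⟨Real.exp l, Real.exp_pos l, ((Real.continuous_exp.tendsto l).comp hl).congr' hexp, ?_⟩
  refine (((Real.hasDerivAt_exp l).isBigO_sub.comp_tendsto hl).congr' ?_ EventuallyEq.rfl).trans ?_
  · filter_upwards [hexp] with n hn
    simp [hn]
  · refine IsBigO.of_bound (2 * c) ?_
    filter_upwards [hdist] with n hn
    rw [Real.norm_eq_abs, Real.norm_of_nonneg (by positivity), mul_one_div]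
    exact hn

theorem sq_mul_prod_succ_div_sub_one_isBigO {a : ℕ → ℝ} (ha_pos : ∀ k, 1 ≤ k → 0 < a k) {C : ℝ}
    (ha : ∀ k, 1 ≤ k → |a k - (1 - 2 / (k : ℝ))| ≤ C / (k : ℝ) ^ ((3 : ℝ) / 2)) :
    (fun n : ℕ => (((n + 1 : ℕ) : ℝ) ^ 2 * ∏ k ∈ Finset.Icc 1 (n + 1), a k) /
      ((n : ℝ) ^ 2 * ∏ k ∈ Finset.Icc 1 n, a k) - 1) =O[atTop]
      fun n : ℕ => 1 / ((n + 1) * √(n + 1)) := by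
  refine IsBigO.of_bound (4 * C + 4) ?_
  filter_upwards [eventually_ge_atTop 1] with n hn
  have hx : (1 : ℝ) ≤ n := Nat.one_le_cast.2 hn
  have hprod : 0 < ∏ k ∈ Finset.Icc 1 n, a k :=
    Finset.prod_pos fun k hk => ha_pos k (Finset.mem_Icc.1 hk).1
  have hratio : (((n + 1 : ℕ) : ℝ) ^ 2 * ∏ k ∈ Finset.Icc 1 (n + 1), a k) /
      ((n : ℝ) ^ 2 * ∏ k ∈ Finset.Icc 1 n, a k) = ((n : ℝ) + 1) ^ 2 * a (n + 1) / (n : ℝ) ^ 2 := by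
    rw [Finset.prod_Icc_succ_top (by omega)]
    push_cast
    field_simp
  have hdefect := ha (n + 1) (by omega)
  push_cast at hdefect
  rw [rpow_three_div_two_eq_mul_sqrt (by positivity)] at hdefect
  rw [hratio, Real.norm_eq_abs, Real.norm_of_nonneg (by positivity)]
  calc _ ≤ 4 * |a (n + 1) - (1 - 2 / ((n : ℝ) + 1))| + 1 / (n : ℝ) ^ 2 :=
        abs_sq_mul_div_sq_sub_one_le hx
    _ ≤ 4 * (C / (((n : ℝ) + 1) * √((n : ℝ) + 1))) + 4 / (((n : ℝ) + 1) * √((n : ℝ) + 1)) := by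
        exact add_le_add (mul_le_mul_of_nonneg_left hdefect (by norm_num))
          (one_div_sq_le_four_div_mul_sqrt hx)
    _ = (4 * C + 4) * (1 / (((n : ℝ) + 1) * √((n : ℝ) + 1))) := by ring

theorem one_div_sqrt_isBigO_log_rpow_div_sqrt {δ : ℝ} (hδ : 0 ≤ δ) :
    (fun n : ℕ => 1 / √n) =O[atTop] fun n : ℕ => Real.log n ^ δ / √n := by
  refine IsBigO.of_bound' ?_
  filter_upwards [(Real.tendsto_log_atTop.comp tendsto_natCast_atTop_atTop).eventually_ge_atTop 1]
    with n hn
  rw [Real.norm_of_nonneg (by positivity), Real.norm_of_nonneg (by positivity)]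
  gcongr
  exact Real.one_le_rpow hn hδ

theorem stmt_17 (a : ℕ → ℝ) (ha_pos : ∀ k, 1 ≤ k → 0 < a k)
    (ha : ∃ C > 0, ∀ k, 1 ≤ k →
      |a k - (1 - 2 / (k : ℝ))| ≤ C / (k : ℝ) ^ ((3:ℝ)/2)) :
    ∃ L > 0,
      (∀ δ : ℝ, 1/2 < δ → ∃ C' > 0, ∀ n : ℕ, 2 ≤ n →
        |(n : ℝ) ^ 2 * ∏ k ∈ Finset.Icc 1 n, a k - L|
          ≤ C' * (Real.log n) ^ δ / Real.sqrt n) ∧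
      Tendsto (fun n : ℕ => (n : ℝ) ^ 2 * ∏ k ∈ Finset.Icc 1 n, a k)
        atTop (nhds L) := by
  obtain ⟨C, -, hC⟩ := ha
  have hb_pos : ∀ n : ℕ, 1 ≤ n → 0 < (n : ℝ) ^ 2 * ∏ k ∈ Finset.Icc 1 n, a k := fun n hn =>
    mul_pos (by positivity) (Finset.prod_pos fun k hk => ha_pos k (Finset.mem_Icc.1 hk).1)
  obtain ⟨L, hL, hlim, hrate⟩ := exists_pos_tendsto_of_div_sub_one_isBigO
    (b := fun n : ℕ => (n : ℝ) ^ 2 * ∏ k ∈ Finset.Icc 1 n, a k)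
    (eventually_atTop.2 ⟨1, hb_pos⟩) (sq_mul_prod_succ_div_sub_one_isBigO ha_pos hC)
  refine ⟨L, hL, fun δ hδ => ?_, hlim⟩
  obtain ⟨C', hC', hbound⟩ := bound_of_isBigO_nat_atTop <|
    hrate.trans (one_div_sqrt_isBigO_log_rpow_div_sqrt (by linarith : 0 ≤ δ))
  refine ⟨C', hC', fun n hn => ?_⟩
  have hn0 : (0 : ℝ) < n := by positivity
  have hlog : 0 < Real.log n := Real.log_pos (by exact_mod_cast hn)
  have := hbound (by positivity : Real.log n ^ δ / √n ≠ 0)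
  rwa [Real.norm_eq_abs, Real.norm_of_nonneg (by positivity), ← mul_div_assoc] at this
end
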